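/- arXiv:1510.04129 — 2 statements merged into one kernel-verified Lean document; each statement's English description precedes it below -/
import Mathlib

section
/- Suppose n+1 ∈ S. Then for every m̄ ∈ ℤ_{≥0}^{n+1} and every 1 ≤ j ≤ n+1, the following identity holds in R: a_j^{−1}·(m_j+1)·σ_j^{−1}(P_{m̄+ε_j}(S,a)) = P_{m̄}(S,a) if j ∈ S, and a_j^{−1}·(m_j+1)·σ_j^{−1}(P_{m̄+ε_j}(S,a)) = (h_j − b)·P_{m̄}(S,a) if j ∉ S. -/
open MvPolynomial

/-- The generators `h_1, …, h_n` of `R = ℂ[h_1,…,h_n]`, together with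
`h_{n+1} := -(h_1 + ⋯ + h_n)`.  Indices: `i : Fin (n+1)` with `(i : ℕ) < n`
corresponding to `h_1, …, h_n` and `i = Fin.last n` to `h_{n+1}`. -/
noncomputable def Hp (n : ℕ) (i : Fin (n + 1)) : MvPolynomial (Fin n) ℂ :=
  if h : (i : ℕ) < n then X ⟨i, h⟩ else -∑ j : Fin n, X j

/-- The automorphism `σ_i` of `R` determined by `σ_i(h_k) = h_k - δ_{k,i}` for `1 ≤ i ≤ n`,
and `σ_{n+1} = id`. -/
noncomputable def sigma (n : ℕ) (i : Fin (n + 1)) :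
    MvPolynomial (Fin n) ℂ ≃ₐ[ℂ] MvPolynomial (Fin n) ℂ :=
  if h : (i : ℕ) < n then
    AlgEquiv.ofAlgHom
      (aeval fun k => X k - if k = ⟨i, h⟩ then 1 else 0)
      (aeval fun k => X k + if k = ⟨i, h⟩ then 1 else 0)
      (by ext k : 1; by_cases hk : k = ⟨i, h⟩ <;> simp [hk])
      (by ext k : 1; by_cases hk : k = ⟨i, h⟩ <;> simp [hk])
  else AlgEquiv.refl

/-- The scalar `a^{m̄}/m̄!`. -/
noncomputable def coef (n : ℕ) (a : Fin (n + 1) → ℂ) (m : Fin (n + 1) → ℕ) : ℂ :=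
  (∏ j, a j ^ m j) / ((∏ j, (m j).factorial : ℕ) : ℂ)

/-- `P_{m̄}(S,a) = (a^{m̄}/m̄!) ∏_{s ∉ S} ∏_{k=1}^{m_s} (h_s - b - k)`. -/
noncomputable def Pm (n : ℕ) (b : ℂ) (S : Finset (Fin (n + 1))) (a : Fin (n + 1) → ℂ)
    (m : Fin (n + 1) → ℕ) : MvPolynomial (Fin n) ℂ :=
  coef n a m • ∏ s ∈ Sᶜ, ∏ k ∈ Finset.range (m s), (Hp n s - C (b + k + 1))

/-- `P'_{m̄}(S,a) = (a^{m̄}/m̄!) ∏_{s∉S, s≠n+1} ∏_{k=1}^{m_s}(h_s - b - k) ⋅ C ⋅`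
`∏_{t=1}^{m_{n+1}}(h_{n+1} + nb - t + 1)`, where
`C = ∏_{r=1}^{N-m_{n+1}}(h_{n+1} - b - 1 + r)` if `n+1 ∈ S` and `C = 1` otherwise. -/
noncomputable def P' (n : ℕ) (b : ℂ) (S : Finset (Fin (n + 1))) (a : Fin (n + 1) → ℂ)
    (N : ℕ) (m : Fin (n + 1) → ℕ) : MvPolynomial (Fin n) ℂ :=
  coef n a m •
    ((∏ s ∈ Sᶜ.erase (Fin.last n), ∏ k ∈ Finset.range (m s), (Hp n s - C (b + k + 1)))
      * (if Fin.last n ∈ S then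
            ∏ r ∈ Finset.range (N - m (Fin.last n)), (Hp n (Fin.last n) - C (b - r))
          else 1)
      * ∏ t ∈ Finset.range (m (Fin.last n)), (Hp n (Fin.last n) + C ((n : ℂ) * b - t)))

/-- `Δ_{m̄}(S,a) = (a^{m̄}/m̄!) ∏_{s∉S} ∏_{k=1}^{m_s}(h_s - b - k) ⋅`
`∏_{r=2}^{N-m_{n+1}}(h_{n+1} - b - 2 + r) ⋅ ∏_{t=1}^{m_{n+1}}(h_{n+1} + nb - t)`. -/
noncomputable def Δm (n : ℕ) (b : ℂ) (S : Finset (Fin (n + 1))) (a : Fin (n + 1) → ℂ)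
    (N : ℕ) (m : Fin (n + 1) → ℕ) : MvPolynomial (Fin n) ℂ :=
  coef n a m •
    ((∏ s ∈ Sᶜ, ∏ k ∈ Finset.range (m s), (Hp n s - C (b + k + 1)))
      * (∏ r ∈ Finset.range (N - m (Fin.last n) - 1), (Hp n (Fin.last n) - C (b - r)))
      * ∏ t ∈ Finset.range (m (Fin.last n)), (Hp n (Fin.last n) + C ((n : ℂ) * b - t - 1)))

/-- `Θ_{m̄}(S,a) = (a^{m̄}/m̄!) ∏_{s∉S, s≠n+1} ∏_{k=1}^{m_s}(h_s - b - k) ⋅`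
`∏_{k=1}^{m_{n+1}}(h_{n+1} - b - k - 1)`. -/
noncomputable def Θm (n : ℕ) (b : ℂ) (S : Finset (Fin (n + 1))) (a : Fin (n + 1) → ℂ)
    (m : Fin (n + 1) → ℕ) : MvPolynomial (Fin n) ℂ :=
  coef n a m •
    ((∏ s ∈ Sᶜ.erase (Fin.last n), ∏ k ∈ Finset.range (m s), (Hp n s - C (b + k + 1)))
      * ∏ k ∈ Finset.range (m (Fin.last n)), (Hp n (Fin.last n) - C (b + k + 2)))

/-- `Υ_{m̄}(S,a) = (a^{m̄}/m̄!) ∏_{s∉S, s≠n+1} ∏_{k=1}^{m_s}(h_s - b - k) ⋅`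
`∏_{t=1}^{m_{n+1}}(h_{n+1} + nb - t)`. -/
noncomputable def Υm (n : ℕ) (b : ℂ) (S : Finset (Fin (n + 1))) (a : Fin (n + 1) → ℂ)
    (m : Fin (n + 1) → ℕ) : MvPolynomial (Fin n) ℂ :=
  coef n a m •
    ((∏ s ∈ Sᶜ.erase (Fin.last n), ∏ k ∈ Finset.range (m s), (Hp n s - C (b + k + 1)))
      * ∏ t ∈ Finset.range (m (Fin.last n)), (Hp n (Fin.last n) + C ((n : ℂ) * b - t - 1)))

/-- `h̄_i = h_i - δ_{i,n+1}`. -/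
noncomputable def Hbar (n : ℕ) (i : Fin (n + 1)) : MvPolynomial (Fin n) ℂ :=
  Hp n i - if i = Fin.last n then 1 else 0

/-- The `(n+1) × (n+1)` matrix `A(λ,b,S,N)` with entries in `R`:
`A_{ii} = h̄_i - λ - N + 2` and, for `i ≠ j`,
`A_{ij} = (δ_{i∈S} + δ_{i∉S}(h̄_i - b)) (δ_{j∈S}(h̄_j - b) + δ_{j∉S})`. -/
noncomputable def Amat (n : ℕ) (lam b : ℂ) (S : Finset (Fin (n + 1))) (N : ℕ) :
    Matrix (Fin (n + 1)) (Fin (n + 1)) (MvPolynomial (Fin n) ℂ) :=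
  fun i j =>
    if i = j then Hbar n i - C (lam + N - 2)
    else (if i ∈ S then 1 else Hbar n i - C b) * (if j ∈ S then Hbar n j - C b else 1)

/-!
Since `n+1 ∈ S`, every factor of `P_{m̄}(S,a)` is a polynomial in a single generator `h_s` with
`s ≤ n`, and `σ_j⁻¹` shifts only `h_j ↦ h_j + 1`. Hence for `j ∈ S` the product is fixed, while
for `j ∉ S` the shift turns `∏_{k=1}^{m_j+1} (h_j - b - k)` into `(h_j - b) ∏_{k=1}^{m_j} (h_j - b - k)`.
The scalar `a_j⁻¹ (m_j + 1)` exactly undoes the change of `a^{m̄}/m̄!`.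
-/

open Finset

lemma coef_add_single (n : ℕ) (a : Fin (n + 1) → ℂ) (m : Fin (n + 1) → ℕ) (j : Fin (n + 1))
    (ha : a j ≠ 0) :
    (a j)⁻¹ * (m j + 1 : ℂ) * coef n a (fun l => m l + if l = j then 1 else 0) = coef n a m := by
  have hpow : ∏ l, a l ^ (m l + if l = j then 1 else 0) = a j * ∏ l, a l ^ m l := by
    simp only [pow_add, prod_mul_distrib, pow_ite, pow_one, pow_zero, prod_ite_eq', mem_univ,
      if_true, mul_comm]
  have hfact : ∏ l, (m l + if l = j then 1 else 0).factorial
      = (m j + 1) * ∏ l, (m l).factorial := by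
    rw [← mul_prod_erase _ _ (mem_univ j), ← mul_prod_erase _ _ (mem_univ j),
      prod_congr rfl fun l hl => by rw [if_neg (ne_of_mem_erase hl), add_zero]]
    simp [Nat.factorial_succ, mul_assoc]
  have hfact0 : (∏ l, ((m l).factorial : ℂ)) ≠ 0 :=
    prod_ne_zero_iff.mpr fun l _ => Nat.cast_ne_zero.mpr (Nat.factorial_ne_zero _)
  have hm : (m j + 1 : ℂ) ≠ 0 := Nat.cast_add_one_ne_zero (m j)
  unfold coef
  rw [hpow, hfact]
  push_cast
  field_simp

lemma prod_range_succ_sub_shift {R : Type*} [CommRing R] (x c : R) (m : ℕ) :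
    ∏ k ∈ range (m + 1), (x + 1 - (c + k + 1)) = (x - c) * ∏ k ∈ range m, (x - (c + k + 1)) := by
  rw [prod_range_succ', mul_comm]
  congr 1
  · simp
  · exact prod_congr rfl fun k _ => by push_cast; ring

lemma sigma_symm_Hp (n : ℕ) (j : Fin (n + 1)) {s : Fin (n + 1)} (hs : s ≠ Fin.last n) :
    (sigma n j).symm (Hp n s) = Hp n s + if s = j then 1 else 0 := by
  have hs' : (s : ℕ) < n := Fin.val_lt_last hs
  unfold sigma
  split_ifs with hj hsj hsj
  · subst hsj
    simp [Hp, hs']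
  · simp [Hp, hs', Fin.ext_iff, Fin.val_eq_val, hsj]
  · exact absurd (hsj ▸ hs') hj
  · simp

lemma sigma_symm_prod_range (n : ℕ) (b : ℂ) (j : Fin (n + 1)) {s : Fin (n + 1)}
    (hs : s ≠ Fin.last n) (m : ℕ) :
    (sigma n j).symm (∏ k ∈ range (m + if s = j then 1 else 0), (Hp n s - C (b + k + 1)))
      = (if s = j then Hp n s - C b else 1) * ∏ k ∈ range m, (Hp n s - C (b + k + 1)) := by
  simp only [map_prod, map_sub, ← algebraMap_eq, AlgEquiv.commutes, sigma_symm_Hp n j hs]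
  simp only [algebraMap_eq, map_add, map_natCast, map_one]
  split_ifs
  · exact prod_range_succ_sub_shift _ _ m
  · simp

theorem statement12_general (n : ℕ) (b : ℂ) (S : Finset (Fin (n + 1)))
    (a : Fin (n + 1) → ℂ) (ha : ∀ j, a j ≠ 0)
    (hS : Fin.last n ∈ S) (m : Fin (n + 1) → ℕ) (j : Fin (n + 1)) :
    ((a j)⁻¹ * (m j + 1 : ℂ)) •
        (sigma n j).symm (Pm n b S a (fun l => m l + if l = j then 1 else 0))
      = if j ∈ S then Pm n b S a m else (Hp n j - C b) * Pm n b S a m := by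
  have hfactor : ∀ s ∈ Sᶜ, (sigma n j).symm
      (∏ k ∈ range (m s + if s = j then 1 else 0), (Hp n s - C (b + k + 1)))
        = (if s = j then Hp n s - C b else 1) * ∏ k ∈ range (m s), (Hp n s - C (b + k + 1)) :=
    fun s hs => sigma_symm_prod_range n b j (ne_of_mem_of_not_mem hS (mem_compl.mp hs)).symm _
  unfold Pm
  rw [map_smul, smul_smul, coef_add_single n a m j (ha j), map_prod, prod_congr rfl hfactor,
    prod_mul_distrib, prod_ite_eq']
  by_cases hj : j ∈ S <;> simp [hj]

/-- Lemma 7(1), first family of identities (`n+1 ∈ S`): for every `m̄` and `1 ≤ j ≤ n+1`,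
`a_j⁻¹ (m_j+1) σ_j⁻¹(P_{m̄+ε_j}(S,a)) = P_{m̄}(S,a)` if `j ∈ S`, and
`= (h_j - b) P_{m̄}(S,a)` if `j ∉ S`. -/
theorem statement12 (n : ℕ) (hn : 1 ≤ n) (b : ℂ) (S : Finset (Fin (n + 1)))
    (a : Fin (n + 1) → ℂ) (ha : ∀ j, a j ≠ 0) (halast : a (Fin.last n) = 1)
    (hS : Fin.last n ∈ S) (m : Fin (n + 1) → ℕ) (j : Fin (n + 1)) :
    ((a j)⁻¹ * (m j + 1 : ℂ)) •
        (sigma n j).symm (Pm n b S a (fun l => m l + if l = j then 1 else 0))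
      = if j ∈ S then Pm n b S a m else (Hp n j - C b) * Pm n b S a m :=
  statement12_general n b S a ha hS m j
end

section
/- Suppose n+1 ∉ S. Then for every m̄ ∈ ℤ_{≥0}^{n+1} and every N ∈ ℤ_{≥0}, the following identities hold in R: for every 1 ≤ j ≤ n, a_j^{−1}·(m_j+1)·σ_j^{−1}(P'_{m̄+ε_j}(S,a)) = Υ_{m̄}(S,a) if j ∈ S, and a_j^{−1}·(m_j+1)·σ_j^{−1}(P'_{m̄+ε_j}(S,a)) = (h_j − b)·Υ_{m̄}(S,a) if j ∉ S; moreover (m_{n+1}+1)·P'_{m̄+ε_{n+1}}(S,a) = (h_{n+1} + nb)·Υ_{m̄}(S,a). -/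
/-!
`σ_j⁻¹` sends `h_j ↦ h_j + 1` and `h_{n+1} ↦ h_{n+1} - 1` and fixes the other `h_s`. Hence it
turns the block `∏_{k=1}^{m_j+1}(h_j - b - k)` of `P'_{m̄+ε_j}` into
`(h_j - b) ∏_{k=1}^{m_j}(h_j - b - k)`, shifts the `h_{n+1}`-block `∏_t (h_{n+1} + nb - t + 1)`
into the one of `Υ`, and leaves the other blocks alone; the coefficients are related by
`(m_j + 1) a^{m̄+ε_j}/(m̄+ε_j)! = a_j a^{m̄}/m̄!`. For `j = n+1` no automorphism is applied, and
peeling off the `t = 1` factor gives `h_{n+1} + nb`.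
-/

open MvPolynomial

open Finset

section ShiftedProducts

variable {ι R : Type*} [CommRing R]

lemma prod_range_succ_sub_C (p : MvPolynomial ι R) (c : R) (m : ℕ) :
    ∏ k ∈ range (m + 1), (p - C (c + k)) = (p - C c) * ∏ k ∈ range m, (p - C (c + k + 1)) := by
  rw [prod_range_succ', mul_comm]
  congr 1
  · simp
  · refine prod_congr rfl fun k _ => ?_
    congr 2
    push_cast
    ring

lemma prod_range_succ_add_C_sub (p : MvPolynomial ι R) (c : R) (m : ℕ) :
    ∏ t ∈ range (m + 1), (p + C (c - t)) = (p + C c) * ∏ t ∈ range m, (p + C (c - t - 1)) := by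
  rw [prod_range_succ', mul_comm]
  congr 1
  · simp
  · refine prod_congr rfl fun t _ => ?_
    congr 2
    push_cast
    ring

end ShiftedProducts

lemma Finset.prod_increment_of_mem {ι M : Type*} [CommMonoid M] [DecidableEq ι] {T : Finset ι}
    {j : ι} (hj : j ∈ T) (f : ι → ℕ → M) (m : ι → ℕ) :
    ∏ l ∈ T, f l (m l + if l = j then 1 else 0) = f j (m j + 1) * ∏ l ∈ T.erase j, f l (m l) := by
  rw [← mul_prod_erase T _ hj, if_pos rfl]
  congr 1
  exact prod_congr rfl fun l hl => by rw [if_neg (ne_of_mem_erase hl), add_zero]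

lemma add_one_mul_coef_increment (n : ℕ) (a : Fin (n + 1) → ℂ) (m : Fin (n + 1) → ℕ)
    (j : Fin (n + 1)) :
    ((m j : ℂ) + 1) * coef n a (fun l => m l + if l = j then 1 else 0) = a j * coef n a m := by
  have hj := mem_univ j
  simp only [coef, prod_increment_of_mem hj (fun l k => a l ^ k),
    prod_increment_of_mem hj (fun l k => k.factorial), ← mul_prod_erase univ _ hj,
    Nat.factorial_succ]
  have hfac : ((∏ l ∈ univ.erase j, (m l).factorial : ℕ) : ℂ) ≠ 0 :=
    Nat.cast_ne_zero.mpr (prod_ne_zero_iff.mpr fun l _ => (m l).factorial_ne_zero)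
  have hmj : ((m j).factorial : ℂ) ≠ 0 := Nat.cast_ne_zero.mpr (m j).factorial_ne_zero
  push_cast
  field_simp
  ring

section Sigma

variable {n : ℕ} {j : Fin (n + 1)}

lemma sigma_symm_C (c : ℂ) : (sigma n j).symm (C c) = C c :=
  (sigma n j).symm.commutes c

lemma sigma_symm_Hp_self (hj : (j : ℕ) < n) : (sigma n j).symm (Hp n j) = Hp n j + 1 := by
  simp [sigma, Hp, hj]

lemma sigma_symm_Hp_of_ne (hj : (j : ℕ) < n) {s : Fin (n + 1)} (hsj : s ≠ j)
    (hs : s ≠ Fin.last n) : (sigma n j).symm (Hp n s) = Hp n s := by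
  have hsn : (s : ℕ) < n := Fin.val_lt_last hs
  have : (⟨s, hsn⟩ : Fin n) ≠ ⟨j, hj⟩ := fun h => hsj (Fin.ext (Fin.mk.inj h))
  simp [sigma, Hp, hj, hsn, this]

lemma sigma_symm_Hp_last (hj : (j : ℕ) < n) :
    (sigma n j).symm (Hp n (Fin.last n)) = Hp n (Fin.last n) - 1 := by
  simp [sigma, Hp, hj, sum_add_distrib, sub_eq_add_neg, add_comm]

lemma sigma_symm_prod_increment (hj : (j : ℕ) < n) (b : ℂ) {s : Fin (n + 1)}
    (hs : s ≠ Fin.last n) (k : ℕ) :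
    (sigma n j).symm (∏ i ∈ range (k + if s = j then 1 else 0), (Hp n s - C (b + i + 1)))
      = (if s = j then Hp n j - C b else 1) * ∏ i ∈ range k, (Hp n s - C (b + i + 1)) := by
  rw [map_prod]
  by_cases hsj : s = j
  · subst hsj
    simp only [if_true, map_sub, sigma_symm_Hp_self hj, sigma_symm_C]
    rw [← prod_range_succ_sub_C]
    exact prod_congr rfl fun i _ => by simp only [map_add, map_one]; ring
  · simp [hsj, sigma_symm_Hp_of_ne hj hsj hs, sigma_symm_C]

lemma sigma_symm_prod_last (hj : (j : ℕ) < n) (c : ℂ) (k : ℕ) :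
    (sigma n j).symm (∏ t ∈ range k, (Hp n (Fin.last n) + C (c - t)))
      = ∏ t ∈ range k, (Hp n (Fin.last n) + C (c - t - 1)) := by
  rw [map_prod]
  exact prod_congr rfl fun t _ => by
    simp only [map_add, sigma_symm_Hp_last hj, sigma_symm_C, map_sub, map_one]; ring

lemma sigma_symm_prod_compl_erase_last (hj : (j : ℕ) < n) (b : ℂ) (S : Finset (Fin (n + 1)))
    (m : Fin (n + 1) → ℕ) :
    (sigma n j).symm (∏ s ∈ Sᶜ.erase (Fin.last n),
        ∏ k ∈ range (m s + if s = j then 1 else 0), (Hp n s - C (b + k + 1)))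
      = (if j ∈ S then 1 else Hp n j - C b)
          * ∏ s ∈ Sᶜ.erase (Fin.last n), ∏ k ∈ range (m s), (Hp n s - C (b + k + 1)) := by
  have hjl : j ≠ Fin.last n := Fin.ne_of_val_ne hj.ne
  rw [map_prod, prod_congr rfl fun s hs =>
    sigma_symm_prod_increment hj b (ne_of_mem_erase hs) (m s), prod_mul_distrib, prod_ite_eq']
  simp [hjl]

end Sigma

lemma P'_of_last_not_mem {n : ℕ} (b : ℂ) {S : Finset (Fin (n + 1))} (hS : Fin.last n ∉ S)
    (a : Fin (n + 1) → ℂ) (N : ℕ) (m : Fin (n + 1) → ℕ) :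
    P' n b S a N m = coef n a m •
      ((∏ s ∈ Sᶜ.erase (Fin.last n), ∏ k ∈ range (m s), (Hp n s - C (b + k + 1)))
        * ∏ t ∈ range (m (Fin.last n)), (Hp n (Fin.last n) + C ((n : ℂ) * b - t))) := by
  rw [P', if_neg hS, mul_one]

theorem statement15_general (n : ℕ) (b : ℂ) (S : Finset (Fin (n + 1)))
    (a : Fin (n + 1) → ℂ) (ha : ∀ j, a j ≠ 0) (halast : a (Fin.last n) = 1)
    (hS : Fin.last n ∉ S) (m : Fin (n + 1) → ℕ) (N : ℕ) :
    (∀ j : Fin (n + 1), (j : ℕ) < n →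
      ((a j)⁻¹ * (m j + 1 : ℂ)) •
          (sigma n j).symm (P' n b S a N (fun l => m l + if l = j then 1 else 0))
        = if j ∈ S then Υm n b S a m else (Hp n j - C b) * Υm n b S a m) ∧
    (m (Fin.last n) + 1 : ℂ) •
        P' n b S a N (fun l => m l + if l = Fin.last n then 1 else 0)
      = (Hp n (Fin.last n) + C ((n : ℂ) * b)) * Υm n b S a m := by
  constructor
  · intro j hj
    have hlj : Fin.last n ≠ j := (Fin.ne_of_val_ne hj.ne).symm
    have hcoef : ((a j)⁻¹ * (m j + 1 : ℂ)) * coef n a (fun l => m l + if l = j then 1 else 0)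
        = coef n a m := by
      rw [mul_assoc, add_one_mul_coef_increment, inv_mul_cancel_left₀ (ha j)]
    rw [P'_of_last_not_mem b hS, map_smul, map_mul, sigma_symm_prod_compl_erase_last hj,
      if_neg hlj, add_zero, sigma_symm_prod_last hj, smul_smul, hcoef, Υm]
    split_ifs <;> simp only [smul_eq_C_mul] <;> ring
  · have hprod : ∏ s ∈ Sᶜ.erase (Fin.last n),
          ∏ k ∈ range (m s + if s = Fin.last n then 1 else 0), (Hp n s - C (b + k + 1))
        = ∏ s ∈ Sᶜ.erase (Fin.last n), ∏ k ∈ range (m s), (Hp n s - C (b + k + 1)) :=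
      prod_congr rfl fun s hs => by rw [if_neg (ne_of_mem_erase hs), add_zero]
    rw [P'_of_last_not_mem b hS, smul_smul, add_one_mul_coef_increment, halast, one_mul, hprod,
      if_pos rfl, prod_range_succ_add_C_sub, Υm]
    simp only [smul_eq_C_mul]
    ring

/-- Lemma 7(2), second family of identities (`n+1 ∉ S`): for every `m̄` and `N`, for `1 ≤ j ≤ n`,
`a_j⁻¹ (m_j+1) σ_j⁻¹(P'_{m̄+ε_j}(S,a)) = Υ_{m̄}(S,a)` if `j ∈ S`,
`= (h_j - b) Υ_{m̄}(S,a)` if `j ∉ S`; moreover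
`(m_{n+1}+1) P'_{m̄+ε_{n+1}}(S,a) = (h_{n+1} + nb) Υ_{m̄}(S,a)`. -/
theorem statement15 (n : ℕ) (hn : 1 ≤ n) (b : ℂ) (S : Finset (Fin (n + 1)))
    (a : Fin (n + 1) → ℂ) (ha : ∀ j, a j ≠ 0) (halast : a (Fin.last n) = 1)
    (hS : Fin.last n ∉ S) (m : Fin (n + 1) → ℕ) (N : ℕ) :
    (∀ j : Fin (n + 1), (j : ℕ) < n →
      ((a j)⁻¹ * (m j + 1 : ℂ)) •
          (sigma n j).symm (P' n b S a N (fun l => m l + if l = j then 1 else 0))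
        = if j ∈ S then Υm n b S a m else (Hp n j - C b) * Υm n b S a m) ∧
    (m (Fin.last n) + 1 : ℂ) •
        P' n b S a N (fun l => m l + if l = Fin.last n then 1 else 0)
      = (Hp n (Fin.last n) + C ((n : ℂ) * b)) * Υm n b S a m :=
  statement15_general n b S a ha halast hS m N
end
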